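/- For the parameter values Λ = 20000, θ = 0.55, ε = 0.55, u = 1/(75·365), α = 10⁻⁶, σ = 1/5.2, ρ = 0.4, γ_A = 1/14, γ_I = 1/7, μ = 0.02, β_s = 0.1, and β_{r0}(τ) = 1−η for 0 ≤ τ < τ̂, β_{r0}(τ) = 1 − η·e^{−γ(τ−τ̂)} for τ ≥ τ̂ with τ̂ = 200, η = 0.2, γ = 0.5, the bifurcation coefficient a is strictly positive: a > 0 (so the model undergoes a backward transcritical bifurcation at R₀ = 1). -/

import Mathlib

/-!
The disease-free quantities are explicit: `N0 = Λ / u`, and `∫ β_{r0} r0` is a multiple of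
`I = ∫ β_{r0}(τ) e^{-uτ} dτ`, so `β̄* · I` is a constant independent of the profile `β_{r0}`.
Substituting `β̄* = c / I` leaves `a` affine and decreasing in `J / I²`, where
`J = ∫ β_{r0}(τ) e^{-uτ} ∫₀^τ β_{r0}`. Since `1 - η ≤ β_{r0} ≤ 1`, we have `I ≥ (1 - η) / u`
and `J ≤ ∫ τ e^{-uτ} dτ = 1 / u²`, so `J / I² ≤ 1 / (1 - η)²`; even at this extreme value the
bracket in `a` is about `648 - 318 - 35 > 0`.
-/

open MeasureTheory Real Set

lemma integral_exp_neg_mul_Ioi {u : ℝ} (hu : 0 < u) :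
    ∫ τ in Ioi (0:ℝ), exp (-u * τ) = 1 / u := by
  rw [integral_exp_mul_Ioi (neg_lt_zero.mpr hu)]
  simp [neg_div, div_neg]

lemma integral_id_mul_exp_neg_mul_Ioi {u : ℝ} (hu : 0 < u) :
    ∫ τ in Ioi (0:ℝ), τ * exp (-u * τ) = 1 / u ^ 2 := by
  have h := integral_rpow_mul_exp_neg_mul_Ioi two_pos hu
  norm_num [Gamma_two] at h
  simpa [one_div, neg_mul] using h

lemma integrableOn_id_mul_exp_neg_mul_Ioi {u : ℝ} (hu : 0 < u) :
    IntegrableOn (fun τ : ℝ => τ * exp (-u * τ)) (Ioi 0) := by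
  simpa using integrableOn_rpow_mul_exp_neg_mul_rpow (s := 1) (p := 1) (by norm_num) one_pos hu

noncomputable def waningProfile (η γ τh τ : ℝ) : ℝ :=
  if τ < τh then 1 - η else 1 - η * exp (-γ * (τ - τh))

section WaningProfile
variable {η γ τh : ℝ}

lemma continuous_waningProfile : Continuous (waningProfile η γ τh) := by
  have : waningProfile η γ τh =
      fun τ => if τh ≤ τ then 1 - η * exp (-γ * (τ - τh)) else 1 - η := by
    ext τ
    simp only [waningProfile, ← not_le, ite_not]
  rw [this]
  exact Continuous.if_le (by fun_prop) continuous_const continuous_const continuous_id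
    fun τ h => by simp [h]

lemma waningProfile_le_one (hη : 0 ≤ η) (τ : ℝ) : waningProfile η γ τh τ ≤ 1 := by
  unfold waningProfile
  split_ifs <;> nlinarith [exp_pos (-γ * (τ - τh))]

lemma one_sub_le_waningProfile (hη : 0 ≤ η) (hγ : 0 ≤ γ) (τ : ℝ) :
    1 - η ≤ waningProfile η γ τh τ := by
  unfold waningProfile
  split_ifs with h
  · rfl
  · have : exp (-γ * (τ - τh)) ≤ 1 := exp_le_one_iff.mpr (by nlinarith)
    nlinarith

end WaningProfile

section BoundedProfile
variable {f : ℝ → ℝ} {u : ℝ}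

lemma integrableOn_mul_exp_neg_mul_Ioi (hu : 0 < u) (hf : Continuous f)
    (hf0 : ∀ τ, 0 ≤ f τ) (hf1 : ∀ τ, f τ ≤ 1) :
    IntegrableOn (fun τ => f τ * exp (-u * τ)) (Ioi 0) := by
  refine (exp_neg_integrableOn_Ioi 0 hu).mono' (by fun_prop : Continuous _).aestronglyMeasurable
    (ae_of_all _ fun τ => ?_)
  rw [norm_mul, norm_of_nonneg (hf0 τ), norm_of_nonneg (exp_pos _).le]
  exact mul_le_of_le_one_left (exp_pos _).le (hf1 τ)

lemma div_le_setIntegral_mul_exp_neg_mul {m : ℝ} (hu : 0 < u) (hf : Continuous f)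
    (hf0 : ∀ τ, 0 ≤ f τ) (hf1 : ∀ τ, f τ ≤ 1) (hm : ∀ τ, m ≤ f τ) :
    m / u ≤ ∫ τ in Ioi 0, f τ * exp (-u * τ) := by
  have h := setIntegral_mono_on ((exp_neg_integrableOn_Ioi 0 hu).const_mul m)
    (integrableOn_mul_exp_neg_mul_Ioi hu hf hf0 hf1) measurableSet_Ioi
    fun τ _ => mul_le_mul_of_nonneg_right (hm τ) (exp_pos (-u * τ)).le
  rwa [integral_const_mul, integral_exp_neg_mul_Ioi hu, mul_one_div] at h

lemma intervalIntegral_le_self_of_le_one (hf : Continuous f) (hf1 : ∀ τ, f τ ≤ 1) {τ : ℝ}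
    (hτ : 0 ≤ τ) : ∫ h in (0:ℝ)..τ, f h ≤ τ := by
  simpa using intervalIntegral.integral_mono_on hτ (hf.intervalIntegrable (μ := volume) 0 τ)
    intervalIntegrable_const fun h _ => hf1 h

lemma setIntegral_mul_exp_neg_mul_primitive_le (hu : 0 < u) (hf : Continuous f)
    (hf0 : ∀ τ, 0 ≤ f τ) (hf1 : ∀ τ, f τ ≤ 1) :
    ∫ τ in Ioi 0, f τ * exp (-u * τ) * ∫ h in (0:ℝ)..τ, f h ≤ 1 / u ^ 2 := by
  have hF0 : ∀ τ, 0 ≤ τ → 0 ≤ ∫ h in (0:ℝ)..τ, f h := fun τ hτ =>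
    intervalIntegral.integral_nonneg hτ fun h _ => hf0 h
  have hbound : ∀ τ ∈ Ioi (0:ℝ),
      f τ * exp (-u * τ) * ∫ h in (0:ℝ)..τ, f h ≤ τ * exp (-u * τ) := fun τ hτ => by
    have hF : f τ * ∫ h in (0:ℝ)..τ, f h ≤ τ :=
      (mul_le_of_le_one_left (hF0 τ hτ.le) (hf1 τ)).trans
        (intervalIntegral_le_self_of_le_one hf hf1 hτ.le)
    rw [mul_right_comm]
    exact mul_le_mul_of_nonneg_right hF (exp_pos _).le
  have hcont : Continuous fun τ => f τ * exp (-u * τ) * ∫ h in (0:ℝ)..τ, f h :=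
    (by fun_prop : Continuous fun τ => f τ * exp (-u * τ)).mul
      (intervalIntegral.continuous_primitive (hf.intervalIntegrable) 0)
  rw [← integral_id_mul_exp_neg_mul_Ioi hu]
  refine setIntegral_mono_on ?_ (integrableOn_id_mul_exp_neg_mul_Ioi hu) measurableSet_Ioi hbound
  refine (integrableOn_id_mul_exp_neg_mul_Ioi hu).mono' hcont.aestronglyMeasurable.restrict
    ((ae_restrict_iff' measurableSet_Ioi).mpr (ae_of_all _ fun τ hτ => ?_))
  rw [norm_of_nonneg (mul_nonneg (mul_nonneg (hf0 τ) (exp_pos _).le) (hF0 τ hτ.le))]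
  exact hbound τ hτ

lemma sq_mul_setIntegral_primitive_le_sq {m : ℝ} (hu : 0 < u) (hf : Continuous f)
    (hm : 0 ≤ m) (hmf : ∀ τ, m ≤ f τ) (hf1 : ∀ τ, f τ ≤ 1) :
    m ^ 2 * ∫ τ in Ioi 0, f τ * exp (-u * τ) * ∫ h in (0:ℝ)..τ, f h
      ≤ (∫ τ in Ioi 0, f τ * exp (-u * τ)) ^ 2 := by
  have hf0 : ∀ τ, 0 ≤ f τ := fun τ => hm.trans (hmf τ)
  calc m ^ 2 * ∫ τ in Ioi 0, f τ * exp (-u * τ) * ∫ h in (0:ℝ)..τ, f h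
      ≤ m ^ 2 * (1 / u ^ 2) := by
        gcongr
        exact setIntegral_mul_exp_neg_mul_primitive_le hu hf hf0 hf1
    _ = (m / u) ^ 2 := by ring
    _ ≤ (∫ τ in Ioi 0, f τ * exp (-u * τ)) ^ 2 := by
      gcongr
      exact div_le_setIntegral_mul_exp_neg_mul hu hf hf0 hf1 hmf

end BoundedProfile

theorem stmt17_general
    (Λ u μ σ γA γI α βs ρ θ ε τh η γ : ℝ)
    (hΛ : Λ = 20000) (hθ : θ = 0.55) (hε : ε = 0.55)
    (hu : u = 1 / (75 * 365)) (hα : α = 1 / 10 ^ 6) (hσ : σ = 1 / 5.2)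
    (hρ : ρ = 0.4) (hγA : γA = 1 / 14) (hγI : γI = 1 / 7) (hμ : μ = 0.02)
    (hβs : βs = 0.1) (hη : η = 0.2) (hγ : γ = 0.5)
    (βr0 : ℝ → ℝ)
    (hβr0 : ∀ τ, βr0 τ =
      if τ < τh then 1 - η else 1 - η * Real.exp (-γ * (τ - τh)))
    (S0 : ℝ) (hS0 : S0 = Λ / (α + u))
    (r0 : ℝ → ℝ) (hr0 : ∀ τ, r0 τ = α * Λ / (α + u) * Real.exp (-u * τ))
    (N0 : ℝ) (hN0 : N0 = S0 + ∫ τ in Set.Ioi (0:ℝ), r0 τ)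
    (K : ℝ) (hK : K = θ + (1 - ρ) * σ * ε / (γA + u) + ρ * σ / (γI + μ + u))
    (βstar : ℝ)
    (hβstar : βstar =
      ((σ + u) * N0 / K - βs * S0) / ∫ τ in Set.Ioi (0:ℝ), βr0 τ * r0 τ)
    (a : ℝ)
    (ha : a = 2 * u / Λ * K *
      (βstar * (α * (σ + u) / (α + u) + γA * (1 - ρ) * σ / (γA + u)
          + γI * ρ * σ / (γI + μ + u)) *
        (∫ τ in Set.Ioi (0:ℝ), βr0 τ * Real.exp (-u * τ))
      - u / (α + u) *
        (βs + α * βstar * ∫ τ in Set.Ioi (0:ℝ), βr0 τ * Real.exp (-u * τ)) *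
        (1 + (1 - ρ) * σ / u + (γI + u) * ρ * σ / (γI + μ + u))
      - α * u / (α + u) * βstar ^ 2 * K *
        (∫ τ in Set.Ioi (0:ℝ),
          βr0 τ * Real.exp (-u * τ) * ∫ h in (0:ℝ)..τ, βr0 h))) :
    0 < a := by
  have hu0 : 0 < u := by rw [hu]; norm_num
  have hη0 : 0 ≤ η := by rw [hη]; norm_num
  have hη1 : 0 < 1 - η := by rw [hη]; norm_num
  have hγ0 : 0 ≤ γ := by rw [hγ]; norm_num
  have hβlo : ∀ τ, 1 - η ≤ βr0 τ := funext hβr0 ▸ one_sub_le_waningProfile hη0 hγ0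
  have hβ1 : ∀ τ, βr0 τ ≤ 1 := funext hβr0 ▸ waningProfile_le_one hη0
  have hβc : Continuous βr0 := funext hβr0 ▸ continuous_waningProfile
  set x := ∫ τ in Ioi (0:ℝ), βr0 τ * exp (-u * τ)
  set y := ∫ τ in Ioi (0:ℝ), βr0 τ * exp (-u * τ) * ∫ h in (0:ℝ)..τ, βr0 h
  have hx0 : 0 < x := (div_pos hη1 hu0).trans_le <| div_le_setIntegral_mul_exp_neg_mul hu0 hβc
    (fun τ => hη1.le.trans (hβlo τ)) hβ1 hβlo
  have hJ : (1 - η) ^ 2 * y ≤ x ^ 2 :=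
    sq_mul_setIntegral_primitive_le_sq hu0 hβc hη1.le hβlo hβ1
  have hN0_eq : N0 = Λ / u := by
    simp_rw [hN0, hr0, integral_const_mul, integral_exp_neg_mul_Ioi hu0, hS0]
    field_simp
    ring
  have hβx : βstar * x = ((σ + u) * (Λ / u) / K - βs * S0) / (α * Λ / (α + u)) := by
    have hIr : ∫ τ in Ioi (0:ℝ), βr0 τ * r0 τ = α * Λ / (α + u) * x := by
      simp_rw [hr0, mul_left_comm _ (α * Λ / (α + u)), integral_const_mul]
      rfl
    rw [hβstar, hIr, hN0_eq]
    field_simp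
  rw [ha, eq_div_of_mul_eq hx0.ne' hβx, hS0, hK]
  subst hΛ hθ hε hu hα hσ hρ hγA hγI hμ hβs hη
  field_simp
  norm_num at hJ ⊢
  linarith [pow_pos hx0 2]

/-- for the paper's parameter values with `β_s = 0.1`, the bifurcation
coefficient satisfies `a > 0`, so the model undergoes a backward transcritical
bifurcation at `R₀ = 1`. -/
theorem stmt17
    (Λ u μ σ γA γI α βs ρ θ ε τh η γ : ℝ)
    (hΛ : Λ = 20000) (hθ : θ = 0.55) (hε : ε = 0.55)
    (hu : u = 1 / (75 * 365)) (hα : α = 1 / 10 ^ 6) (hσ : σ = 1 / 5.2)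
    (hρ : ρ = 0.4) (hγA : γA = 1 / 14) (hγI : γI = 1 / 7) (hμ : μ = 0.02)
    (hβs : βs = 0.1) (hτh : τh = 200) (hη : η = 0.2) (hγ : γ = 0.5)
    (βr0 : ℝ → ℝ)
    (hβr0 : ∀ τ, βr0 τ =
      if τ < τh then 1 - η else 1 - η * Real.exp (-γ * (τ - τh)))
    (S0 : ℝ) (hS0 : S0 = Λ / (α + u))
    (r0 : ℝ → ℝ) (hr0 : ∀ τ, r0 τ = α * Λ / (α + u) * Real.exp (-u * τ))
    (N0 : ℝ) (hN0 : N0 = S0 + ∫ τ in Set.Ioi (0:ℝ), r0 τ)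
    (K : ℝ) (hK : K = θ + (1 - ρ) * σ * ε / (γA + u) + ρ * σ / (γI + μ + u))
    (βstar : ℝ)
    (hβstar : βstar =
      ((σ + u) * N0 / K - βs * S0) / ∫ τ in Set.Ioi (0:ℝ), βr0 τ * r0 τ)
    (a : ℝ)
    (ha : a = 2 * u / Λ * K *
      (βstar * (α * (σ + u) / (α + u) + γA * (1 - ρ) * σ / (γA + u)
          + γI * ρ * σ / (γI + μ + u)) *
        (∫ τ in Set.Ioi (0:ℝ), βr0 τ * Real.exp (-u * τ))
      - u / (α + u) *
        (βs + α * βstar * ∫ τ in Set.Ioi (0:ℝ), βr0 τ * Real.exp (-u * τ)) *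
        (1 + (1 - ρ) * σ / u + (γI + u) * ρ * σ / (γI + μ + u))
      - α * u / (α + u) * βstar ^ 2 * K *
        (∫ τ in Set.Ioi (0:ℝ),
          βr0 τ * Real.exp (-u * τ) * ∫ h in (0:ℝ)..τ, βr0 h))) :
    0 < a :=
  stmt17_general Λ u μ σ γA γI α βs ρ θ ε τh η γ hΛ hθ hε hu hα hσ hρ hγA hγI hμ hβs hη hγ βr0 hβr0
    S0 hS0 r0 hr0 N0 hN0 K hK βstar hβstar a ha
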